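/- For any even unimodular symmetric bilinear form q over ℤ of rank r, the form q ⊕ (−q) is isomorphic to the direct sum of r copies of the hyperbolic plane H. -/

import Mathlib

/-!
Let `G = A⁻¹`; it is again symmetric with even diagonal, since `G i i = x ⬝ᵥ A *ᵥ x` for
`x = G *ᵥ eᵢ`. Hence `G = C + Cᵀ` for an integer matrix `C` (strict lower part plus half the
diagonal), and the columns of `P = [[1, Cᵀ], [1, -C]]` form a hyperbolic basis for `A ⊕ (-A)`:
`Pᵀ (A ⊕ -A) P = [[0, 1], [1, 0]]`, while `det P = det (-G)` is a unit.
-/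

open Matrix

/-- The hyperbolic plane `H` over `ℤ`, with Gram matrix `[[0,1],[1,0]]`. -/
def hyperbolicPlane : Matrix (Fin 2) (Fin 2) ℤ := !![0, 1; 1, 0]

theorem Matrix.exists_add_transpose_eq_of_even_diag {n R : Type*} [LinearOrder n]
    [AddCommMonoid R] {G : Matrix n n R} (hG : G.IsSymm) (hdiag : ∀ i, Even (G i i)) :
    ∃ C : Matrix n n R, C + Cᵀ = G := by
  choose d hd using hdiag
  refine ⟨of fun i j => if j < i then G i j else if i = j then d i else 0, ?_⟩
  ext i j
  rcases lt_trichotomy i j with h | rfl | h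
  · simp [h, h.ne, not_lt_of_gt h, hG.apply i j]
  · simp [hd]
  · simp [h, h.ne, not_lt_of_gt h]

theorem Matrix.even_inv_apply_self {n R : Type*} [Fintype n] [DecidableEq n] [CommRing R]
    {A : Matrix n n R} (hA : IsUnit A.det) (heven : ∀ x : n → R, Even (x ⬝ᵥ A *ᵥ x)) (i : n) :
    Even (A⁻¹ i i) := by
  have h := heven (A⁻¹ *ᵥ Pi.single i 1)
  rw [mulVec_mulVec, mul_nonsing_inv A hA, one_mulVec, dotProduct_single, mul_one,
    mulVec_single] at h
  simpa using h

section Hyperbolic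

variable {n R : Type*} [Fintype n] [DecidableEq n] [CommRing R]

theorem Matrix.transpose_mul_fromBlocks_neg_mul_eq {A C : Matrix n n R} (hA : IsUnit A.det)
    (hC : C + Cᵀ = A⁻¹) :
    (fromBlocks 1 Cᵀ 1 (-C))ᵀ * fromBlocks A 0 0 (-A) * fromBlocks 1 Cᵀ 1 (-C) =
      (fromBlocks 0 1 1 0 : Matrix (n ⊕ n) (n ⊕ n) R) := by
  have hAG : A * (C + Cᵀ) = 1 := hC ▸ mul_nonsing_inv A hA
  have hGA : (C + Cᵀ) * A = 1 := hC ▸ nonsing_inv_mul A hA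
  -- both `C A Cᵀ` and `Cᵀ A C` equal `C - C A C`, because `C + Cᵀ = A⁻¹`
  have hCACt : C * A * Cᵀ = C - C * A * C := by
    rw [eq_sub_iff_add_eq, mul_assoc, mul_assoc, ← mul_add, ← mul_add, add_comm Cᵀ, hAG,
      mul_one]
  have hCtAC : Cᵀ * A * C = C - C * A * C := by
    rw [eq_sub_iff_add_eq, ← add_mul, ← add_mul, add_comm Cᵀ, hGA, one_mul]
  simp only [fromBlocks_transpose, fromBlocks_multiply, transpose_one, transpose_neg,
    transpose_transpose, one_mul, mul_one, mul_zero, add_zero, zero_add, mul_neg,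
    neg_mul, neg_neg]
  rw [fromBlocks_inj]
  refine ⟨add_neg_cancel A, ?_, ?_, ?_⟩
  · rw [← mul_add, add_comm, hAG]
  · rw [← add_mul, hGA]
  · rw [hCACt, hCtAC, add_neg_cancel]

theorem Matrix.det_fromBlocks_one_transpose_neg (C : Matrix n n R) :
    (fromBlocks 1 Cᵀ 1 (-C)).det = (-(C + Cᵀ)).det := by
  rw [det_fromBlocks_one₁₁, one_mul, neg_add, sub_eq_add_neg]

end Hyperbolic

theorem reindex_blockDiagonal_hyperbolicPlane (r : ℕ) :
    reindex
        ((finTwoEquiv.prodCongr (Equiv.refl (Fin r))).trans (Equiv.boolProdEquivSum (Fin r)))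
        ((finTwoEquiv.prodCongr (Equiv.refl (Fin r))).trans (Equiv.boolProdEquivSum (Fin r)))
        (blockDiagonal fun _ : Fin r => hyperbolicPlane) =
      fromBlocks (0 : Matrix (Fin r) (Fin r) ℤ) 1 1 0 := by
  ext (i | i) (j | j) <;>
    simp [blockDiagonal_apply, hyperbolicPlane, one_apply, Equiv.boolProdEquivSum, finTwoEquiv]

/-- For any even unimodular symmetric bilinear form `q` over `ℤ` of rank `r`,
the form `q ⊕ (−q)` is isomorphic to the direct sum of `r` copies of the
hyperbolic plane `H`. -/
theorem stmt_10 (r : ℕ) (A : Matrix (Fin r) (Fin r) ℤ)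
    (hsymm : A.IsSymm) (hunimod : IsUnit A.det)
    (heven : ∀ x : Fin r → ℤ, Even (x ⬝ᵥ A.mulVec x)) :
    ∃ P : Matrix (Fin r ⊕ Fin r) (Fin r ⊕ Fin r) ℤ, IsUnit P.det ∧
      Pᵀ * fromBlocks A 0 0 (-A) * P =
        reindex
          (((finTwoEquiv.prodCongr (Equiv.refl (Fin r))).trans
            (Equiv.boolProdEquivSum (Fin r))))
          (((finTwoEquiv.prodCongr (Equiv.refl (Fin r))).trans
            (Equiv.boolProdEquivSum (Fin r))))
          (blockDiagonal fun _ : Fin r => hyperbolicPlane) := by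
  obtain ⟨C, hC⟩ :=
    exists_add_transpose_eq_of_even_diag hsymm.inv (even_inv_apply_self hunimod heven)
  refine ⟨fromBlocks 1 Cᵀ 1 (-C), ?_, ?_⟩
  · rw [det_fromBlocks_one_transpose_neg, hC, det_neg]
    exact (isUnit_neg_one.pow _).mul (isUnit_nonsing_inv_det A hunimod)
  · rw [reindex_blockDiagonal_hyperbolicPlane, transpose_mul_fromBlocks_neg_mul_eq hunimod hC]
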